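/- Let p, m, p_C, m_C be natural numbers, E11 ∈ ℂ^{p_C×m_C}, E12 ∈ ℂ^{p_C×p}, E21 ∈ ℂ^{m×m_C}, E22 ∈ ℂ^{m×p}, Σ ∈ ℂ^{p×m} with I − E22·Σ invertible, and set M = Σ·(I − E22·Σ)⁻¹, N̄11 = [[M, I, M],[I, 0, 0],[M, 0, M]], N̄12 = [M·E21; E21; M·E21], N̄21 = [E12·M, E12, E12·M], and N the 4×4-block matrix [[M, I, M, M·E21],[I, 0, 0, E21],[M, 0, M, M·E21],[E12·M, E12, E12·M, 0]]. Let V_E ∈ ℂ^{p×p}, W_E ∈ ℂ^{m×m}, V_F ∈ ℂ^{m×m}, W_F ∈ ℂ^{p×p}, V_Cw ∈ ℂ^{p_C×p_C}, W_Cw ∈ ℂ^{m_C×m_C} be invertible, and set V = diag(V_E, V_F, V_E, V_Cw) and W = diag(W_E, W_F, W_E, W_Cw). Suppose there exist a Hermitian positive definite S ∈ ℂ^{2×2} and d_F > 0 such that, with D_l = [[S₁₁·I_p, 0, S₁₂·I_p, 0],[0, d_F·I_m, 0, 0],[S₂₁·I_p, 0, S₂₂·I_p, 0],[0, 0, 0,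 I_{p_C}]] and D_r = [[S₁₁·I_m, 0, S₁₂·I_m, 0],[0, d_F·I_p, 0, 0],[S₂₁·I_m, 0, S₂₂·I_m, 0],[0, 0, 0, I_{m_C}]], the matrix D_l − (V·N·W)·D_r·(V·N·W)^H is positive definite. Then for all E_E ∈ ℂ^{m×p} and E_F ∈ ℂ^{p×m} with ‖W_E⁻¹·E_E·V_E⁻¹‖ ≤ 1 and ‖W_F⁻¹·E_F·V_F⁻¹‖ ≤ 1, writing Δ = diag(E_E, E_F, E_E), the matrix I − N̄11·Δ is invertible and the weighted closed-loop error satisfies ‖V_Cw·(N̄21·Δ·(I − N̄11·Δ)⁻¹·N̄12)·W_Cw‖ < 1. -/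

import Mathlib

/-!
Normalize the perturbation to `Δ = diag(A, B, A)` with `A = W_E⁻¹ E_E V_E⁻¹`, `B = W_F⁻¹ E_F V_F⁻¹`;
by the push-through identity `X (1 - Y X)⁻¹ = (1 - X Y)⁻¹ X` the weighted error is then the upper
LFT of `𝒩 = V N W` at `Δ`. The scaled inequality `D_l − 𝒩 D_r 𝒩ᴴ ≻ 0` is a strict Stein
inequality, which survives right multiplication of `𝒩` by any `Δₑ` with `D_r − Δₑ D_l Δₑᴴ ⪰ 0`
and forces `1 − 𝒩 Δₑ` to be invertible. The scalings commute with the structure of `Δ`, so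
`Δₑ = diag(Δ, Ξ)` qualifies for every contraction `Ξ`. Taking `Ξ = 0` gives well-posedness. If the
LFT `F` had norm `≥ 1`, then `Ξ = Fᴴ / ‖F‖²` would be a contraction with `1 − F Ξ` singular, since
`‖F‖²` lies in the spectrum of `F Fᴴ`; by the Schur complement `1 − 𝒩 diag(Δ, Ξ)` would be singular.
-/

open Matrix
open scoped ComplexOrder Matrix.Norms.L2Operator

namespace Matrix

lemma fromBlocks_sub {R l m n o : Type*} [Sub R] (A A' : Matrix n l R) (B B' : Matrix n m R)
    (C C' : Matrix o l R) (D D' : Matrix o m R) :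
    fromBlocks A B C D - fromBlocks A' B' C' D' =
      fromBlocks (A - A') (B - B') (C - C') (D - D') := by
  ext (i | i) (j | j) <;> rfl

lemma mul_nonsing_inv_mul_nonsing_inv_mul_cancel {α l m : Type*} [CommRing α] [Fintype l]
    [Fintype m] [DecidableEq l] [DecidableEq m] {A : Matrix l l α} {B : Matrix m m α}
    (hA : IsUnit A) (hB : IsUnit B) (E : Matrix l m α) : A * (A⁻¹ * E * B⁻¹) * B = E := by
  rw [Matrix.mul_assoc, nonsing_inv_mul_cancel_right _ _ ((isUnit_iff_isUnit_det B).mp hB),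
    mul_nonsing_inv_cancel_left _ _ ((isUnit_iff_isUnit_det A).mp hA)]

section RCLike

variable {𝕜 : Type*} [RCLike 𝕜] {m n o l m' n' o' l' : Type*}

lemma PosSemidef.fromBlocks_zero [Fintype m] [Fintype n] {A : Matrix m m 𝕜} {D : Matrix n n 𝕜}
    (hA : A.PosSemidef) (hD : D.PosSemidef) : (fromBlocks A 0 0 D).PosSemidef := by
  classical
  have h := (hA.mul_mul_conjTranspose_same (fromRows (1 : Matrix m m 𝕜) (0 : Matrix n m 𝕜))).add
    (hD.mul_mul_conjTranspose_same (fromRows (0 : Matrix m n 𝕜) (1 : Matrix n n 𝕜)))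
  convert h using 1
  ext (i | i) (j | j) <;> simp [conjTranspose_fromRows_eq_fromCols_conjTranspose]

lemma PosSemidef.fromBlocks_sub_mul_mul_conjTranspose [Fintype m] [Fintype n] [Fintype m']
    [Fintype n'] {E₁ : Matrix m m 𝕜} {E₂ : Matrix n n 𝕜} {D₁ : Matrix m' m' 𝕜}
    {D₂ : Matrix n' n' 𝕜} {X : Matrix m m' 𝕜} {Y : Matrix n n' 𝕜}
    (h₁ : (E₁ - X * D₁ * Xᴴ).PosSemidef) (h₂ : (E₂ - Y * D₂ * Yᴴ).PosSemidef) :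
    (fromBlocks E₁ 0 0 E₂ - fromBlocks X 0 0 Y * fromBlocks D₁ 0 0 D₂ *
      (fromBlocks X 0 0 Y)ᴴ).PosSemidef := by
  simpa [fromBlocks_conjTranspose, fromBlocks_multiply, fromBlocks_sub] using h₁.fromBlocks_zero h₂

lemma isUnit_one_sub_of_posDef_sub_mul_mul_conjTranspose [Fintype m] [DecidableEq m]
    {T D : Matrix m m 𝕜} (h : (D - T * D * Tᴴ).PosDef) : IsUnit (1 - T) := by
  -- a left null vector `y` of `1 - T` is fixed by `T`, so the quadratic form vanishes at `star y`
  by_contra hT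
  obtain ⟨y, hy0, hy⟩ : ∃ y : m → 𝕜, y ≠ 0 ∧ y ᵥ* (1 - T) = 0 :=
    exists_vecMul_eq_zero_iff.mpr (by simpa [isUnit_iff_isUnit_det, isUnit_iff_ne_zero] using hT)
  have hyT : y ᵥ* T = y := by
    rw [vecMul_sub, vecMul_one, sub_eq_zero] at hy
    exact hy.symm
  have hpos := h.dotProduct_mulVec_pos (x := star y) (by simpa using hy0)
  rw [sub_mulVec, dotProduct_sub, ← mulVec_mulVec, ← mulVec_mulVec, star_star,
    dotProduct_mulVec y T, hyT, ← star_vecMul, hyT] at hpos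
  simp at hpos

lemma PosDef.sub_mul_mul_conjTranspose_of_posSemidef [Fintype m] [Fintype n]
    {Dₗ : Matrix m m 𝕜} {Dᵣ : Matrix n n 𝕜} {N : Matrix m n 𝕜} {Δ : Matrix n m 𝕜}
    (hN : (Dₗ - N * Dᵣ * Nᴴ).PosDef) (hΔ : (Dᵣ - Δ * Dₗ * Δᴴ).PosSemidef) :
    (Dₗ - (N * Δ) * Dₗ * (N * Δ)ᴴ).PosDef := by
  have hsplit : Dₗ - (N * Δ) * Dₗ * (N * Δ)ᴴ =
      (Dₗ - N * Dᵣ * Nᴴ) + N * (Dᵣ - Δ * Dₗ * Δᴴ) * Nᴴ := by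
    simp only [conjTranspose_mul, Matrix.mul_sub, Matrix.sub_mul, Matrix.mul_assoc]
    abel
  rw [hsplit]
  exact hN.add_posSemidef (hΔ.mul_mul_conjTranspose_same N)

section Inverse

variable [Fintype m] [Fintype n] [DecidableEq m] [DecidableEq n]

lemma isUnit_one_sub_mul_comm {A : Matrix m n 𝕜} {B : Matrix n m 𝕜} (h : IsUnit (1 - A * B)) :
    IsUnit (1 - B * A) := by
  rwa [isUnit_iff_isUnit_det, det_one_sub_mul_comm, ← isUnit_iff_isUnit_det]

lemma mul_inv_one_sub_mul_comm {A : Matrix m n 𝕜} {B : Matrix n m 𝕜} (h : IsUnit (1 - A * B)) :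
    A * (1 - B * A)⁻¹ = (1 - A * B)⁻¹ * A := by
  have h' := (isUnit_iff_isUnit_det _).mp (isUnit_one_sub_mul_comm h)
  calc A * (1 - B * A)⁻¹ = (1 - A * B)⁻¹ * ((1 - A * B) * A) * (1 - B * A)⁻¹ := by
        rw [nonsing_inv_mul_cancel_left _ _ ((isUnit_iff_isUnit_det _).mp h)]
    _ = (1 - A * B)⁻¹ * A * (1 - B * A) * (1 - B * A)⁻¹ := by
        simp only [Matrix.sub_mul, Matrix.mul_sub, Matrix.one_mul, Matrix.mul_one,
          Matrix.mul_assoc]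
    _ = (1 - A * B)⁻¹ * A := mul_nonsing_inv_cancel_right _ _ h'

end Inverse

noncomputable def upperLFT [Fintype m] [DecidableEq m] [Fintype n] (N₁₁ : Matrix m n 𝕜)
    (N₁₂ : Matrix m l 𝕜) (N₂₁ : Matrix o n 𝕜) (N₂₂ : Matrix o l 𝕜) (Δ : Matrix n m 𝕜) :
    Matrix o l 𝕜 :=
  N₂₂ + N₂₁ * Δ * (1 - N₁₁ * Δ)⁻¹ * N₁₂

lemma mul_upperLFT_mul [Fintype m] [Fintype n] [Fintype o] [Fintype l] [Fintype m'] [Fintype n']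
    [DecidableEq m] [DecidableEq m'] {N₁₁ : Matrix m n 𝕜} (N₁₂ : Matrix m l 𝕜) (N₂₁ : Matrix o n 𝕜)
    (N₂₂ : Matrix o l 𝕜) {P : Matrix m' m 𝕜} {Q : Matrix n n' 𝕜} {Δ : Matrix n' m' 𝕜}
    (R : Matrix o' o 𝕜) (R' : Matrix l l' 𝕜) (h : IsUnit (1 - P * N₁₁ * Q * Δ)) :
    R * upperLFT N₁₁ N₁₂ N₂₁ N₂₂ (Q * Δ * P) * R' =
      upperLFT (P * N₁₁ * Q) (P * N₁₂ * R') (R * N₂₁ * Q) (R * N₂₂ * R') Δ := by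
  have hpush := mul_inv_one_sub_mul_comm (A := P) (B := N₁₁ * Q * Δ)
    (by simpa only [Matrix.mul_assoc] using h)
  simp only [upperLFT, Matrix.mul_add, Matrix.add_mul, Matrix.mul_assoc] at hpush ⊢
  rw [← Matrix.mul_assoc P, hpush]
  simp only [Matrix.mul_assoc]

lemma det_one_sub_fromBlocks_mul_fromBlocks [Fintype m] [Fintype n] [Fintype o] [Fintype l]
    [DecidableEq m] [DecidableEq o] (N₁₁ : Matrix m n 𝕜) (N₁₂ : Matrix m l 𝕜)
    (N₂₁ : Matrix o n 𝕜) (N₂₂ : Matrix o l 𝕜) (Δ : Matrix n m 𝕜) (Ξ : Matrix l o 𝕜)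
    (hΔ : IsUnit (1 - N₁₁ * Δ)) :
    (1 - fromBlocks N₁₁ N₁₂ N₂₁ N₂₂ * fromBlocks Δ 0 0 Ξ).det =
      (1 - N₁₁ * Δ).det * (1 - upperLFT N₁₁ N₁₂ N₂₁ N₂₂ Δ * Ξ).det := by
  have := hΔ.invertible
  rw [fromBlocks_multiply, ← fromBlocks_one]
  simp only [Matrix.mul_zero, add_zero, zero_add, fromBlocks_sub, zero_sub]
  rw [det_fromBlocks₁₁, invOf_eq_nonsing_inv, upperLFT]
  congr 2
  simp only [Matrix.neg_mul, Matrix.mul_neg, neg_neg, Matrix.add_mul, Matrix.mul_assoc, sub_sub]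

/-- `s ⊗ P ⊕ d • Q` (see `blockScaling_eq_submatrix`), laid out on the blocks of
`diag(A, B, A)` so that `s` couples the two copies of the repeated block `A`. -/
def blockScaling (s : Matrix (Fin 2) (Fin 2) 𝕜) (d : 𝕜) (P : Matrix n n 𝕜) (Q : Matrix m m 𝕜) :
    Matrix (n ⊕ (m ⊕ n)) (n ⊕ (m ⊕ n)) 𝕜 :=
  fromBlocks (s 0 0 • P) (fromCols 0 (s 0 1 • P)) (fromRows 0 (s 1 0 • P))
    (fromBlocks (d • Q) 0 0 (s 1 1 • P))

open scoped Kronecker in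
lemma blockScaling_eq_submatrix (s : Matrix (Fin 2) (Fin 2) 𝕜) (d : 𝕜) (P : Matrix n n 𝕜)
    (Q : Matrix m m 𝕜) :
    blockScaling s d P Q = (fromBlocks (s ⊗ₖ P) 0 0 (d • Q)).submatrix
      (Sum.elim (fun i => .inl (0, i)) (Sum.elim .inr (fun i => .inl (1, i))))
      (Sum.elim (fun i => .inl (0, i)) (Sum.elim .inr (fun i => .inl (1, i)))) := by
  ext (i | i | i) (j | j | j) <;> rfl

lemma PosSemidef.blockScaling [Fintype n] [Fintype m] {s : Matrix (Fin 2) (Fin 2) 𝕜}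
    (hs : s.PosSemidef) {d : 𝕜} (hd : 0 ≤ d) {P : Matrix n n 𝕜} {Q : Matrix m m 𝕜}
    (hP : P.PosSemidef) (hQ : Q.PosSemidef) : (blockScaling s d P Q).PosSemidef := by
  rw [blockScaling_eq_submatrix]
  exact ((hs.kronecker hP).fromBlocks_zero (hQ.smul hd)).submatrix _

lemma blockScaling_sub (s : Matrix (Fin 2) (Fin 2) 𝕜) (d : 𝕜) (P P' : Matrix n n 𝕜)
    (Q Q' : Matrix m m 𝕜) :
    blockScaling s d P Q - blockScaling s d P' Q' = blockScaling s d (P - P') (Q - Q') := by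
  ext (i | i | i) (j | j | j) <;> simp [blockScaling, mul_sub]

lemma fromBlocks_mul_blockScaling_mul_conjTranspose [Fintype n] [Fintype m]
    (s : Matrix (Fin 2) (Fin 2) 𝕜) (d : 𝕜) (P : Matrix n n 𝕜) (Q : Matrix m m 𝕜)
    (A : Matrix n' n 𝕜) (B : Matrix m' m 𝕜) :
    fromBlocks A 0 0 (fromBlocks B 0 0 A) * blockScaling s d P Q *
        (fromBlocks A 0 0 (fromBlocks B 0 0 A))ᴴ =
      blockScaling s d (A * P * Aᴴ) (B * Q * Bᴴ) := by
  simp [blockScaling, fromBlocks_conjTranspose, fromBlocks_multiply, fromCols_mul_fromBlocks,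
    fromBlocks_mul_fromRows, Matrix.mul_assoc]

end RCLike

section Complex

variable {m n : Type*} [Fintype m] [Fintype n] [DecidableEq m] [DecidableEq n]

open scoped MatrixOrder in
lemma posSemidef_one_sub_mul_conjTranspose_of_norm_le_one {A : Matrix m n ℂ} (hA : ‖A‖ ≤ 1) :
    (1 - A * Aᴴ).PosSemidef := by
  have hnorm : ‖A * Aᴴ‖ ≤ 1 := by
    have := l2_opNorm_conjTranspose_mul_self Aᴴ
    rw [conjTranspose_conjTranspose, l2_opNorm_conjTranspose] at this
    rw [this]
    nlinarith [norm_nonneg A]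
  have := (CStarAlgebra.norm_le_iff_le_algebraMap _ zero_le_one
    (posSemidef_self_mul_conjTranspose A).nonneg).mp hnorm
  rwa [map_one, Matrix.le_iff] at this

lemma posSemidef_blockScaling_sub_mul_mul_conjTranspose {s : Matrix (Fin 2) (Fin 2) ℂ}
    (hs : s.PosSemidef) {d : ℂ} (hd : 0 ≤ d) {A : Matrix m n ℂ} {B : Matrix n m ℂ}
    (hA : ‖A‖ ≤ 1) (hB : ‖B‖ ≤ 1) :
    (blockScaling s d (1 : Matrix m m ℂ) (1 : Matrix n n ℂ) -
      fromBlocks A 0 0 (fromBlocks B 0 0 A) *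
        blockScaling s d (1 : Matrix n n ℂ) (1 : Matrix m m ℂ) *
          (fromBlocks A 0 0 (fromBlocks B 0 0 A))ᴴ).PosSemidef := by
  rw [fromBlocks_mul_blockScaling_mul_conjTranspose, blockScaling_sub, Matrix.mul_one,
    Matrix.mul_one]
  exact hs.blockScaling hd (posSemidef_one_sub_mul_conjTranspose_of_norm_le_one hA)
    (posSemidef_one_sub_mul_conjTranspose_of_norm_le_one hB)

open scoped MatrixOrder in
lemma exists_norm_le_one_not_isUnit_one_sub_mul {G : Matrix m n ℂ} (hG : 1 ≤ ‖G‖) :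
    ∃ Ξ : Matrix n m ℂ, ‖Ξ‖ ≤ 1 ∧ ¬ IsUnit (1 - G * Ξ) := by
  have : Nonempty m := by
    by_contra h
    have := not_nonempty_iff.mp h
    rw [Subsingleton.elim G 0, norm_zero] at hG
    norm_num at hG
  have hσ : 0 < ‖G‖ * ‖G‖ := by nlinarith
  have hmem :=
    CStarAlgebra.norm_mem_spectrum_of_nonneg (posSemidef_self_mul_conjTranspose G).nonneg
  have hGG : ‖G * Gᴴ‖ = ‖G‖ * ‖G‖ := by
    simpa [l2_opNorm_conjTranspose] using l2_opNorm_conjTranspose_mul_self Gᴴ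
  rw [hGG, spectrum.mem_iff, Algebra.algebraMap_eq_smul_one] at hmem
  refine ⟨(‖G‖ * ‖G‖)⁻¹ • Gᴴ, ?_, fun h => hmem ?_⟩
  · rw [norm_smul, l2_opNorm_conjTranspose, norm_inv, Real.norm_of_nonneg hσ.le,
      mul_inv, inv_mul_cancel_right₀ (by positivity)]
    exact inv_le_one_of_one_le₀ hG
  · have hfac : (‖G‖ * ‖G‖) • (1 : Matrix m m ℂ) - G * Gᴴ =
        Units.mk0 _ hσ.ne' • (1 - G * (‖G‖ * ‖G‖)⁻¹ • Gᴴ) := by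
      rw [Units.smul_mk0, smul_sub, Matrix.mul_smul, smul_smul, mul_inv_cancel₀ hσ.ne',
        one_smul]
    rwa [hfac, isUnit_smul_iff]

end Complex

lemma isUnit_one_sub_mul_and_norm_upperLFT_lt_one {m n o l : Type*} [Fintype m] [Fintype n]
    [Fintype o] [Fintype l] [DecidableEq m] [DecidableEq o] [DecidableEq l]
    {N₁₁ : Matrix m n ℂ} {N₁₂ : Matrix m l ℂ} {N₂₁ : Matrix o n ℂ} {N₂₂ : Matrix o l ℂ}
    {Δ : Matrix n m ℂ}
    (h : ∀ Ξ : Matrix l o ℂ, ‖Ξ‖ ≤ 1 →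
      IsUnit (1 - fromBlocks N₁₁ N₁₂ N₂₁ N₂₂ * fromBlocks Δ 0 0 Ξ)) :
    IsUnit (1 - N₁₁ * Δ) ∧ ‖upperLFT N₁₁ N₁₂ N₂₁ N₂₂ Δ‖ < 1 := by
  have hΔ : IsUnit (1 - N₁₁ * Δ) := by
    have h₀ := h 0 (by simp)
    rw [fromBlocks_multiply, ← fromBlocks_one] at h₀
    simp only [Matrix.mul_zero, add_zero, fromBlocks_sub, sub_zero, zero_sub] at h₀
    rwa [isUnit_iff_isUnit_det, det_fromBlocks_zero₁₂, det_one, mul_one,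
      ← isUnit_iff_isUnit_det] at h₀
  refine ⟨hΔ, not_le.mp fun hF => ?_⟩
  obtain ⟨Ξ, hΞ, hsing⟩ := exists_norm_le_one_not_isUnit_one_sub_mul hF
  have hunit := h Ξ hΞ
  rw [isUnit_iff_isUnit_det, det_one_sub_fromBlocks_mul_fromBlocks _ _ _ _ _ _ hΔ,
    IsUnit.mul_iff] at hunit
  exact hsing ((isUnit_iff_isUnit_det _).mpr hunit.2)

end Matrix

theorem robust_performance_general
    (p m pC mC : ℕ)
    (N11 : Matrix (Fin p ⊕ (Fin m ⊕ Fin p)) (Fin m ⊕ (Fin p ⊕ Fin m)) ℂ)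
    (N12 : Matrix (Fin p ⊕ (Fin m ⊕ Fin p)) (Fin mC) ℂ)
    (N21 : Matrix (Fin pC) (Fin m ⊕ (Fin p ⊕ Fin m)) ℂ)
    (N : Matrix ((Fin p ⊕ (Fin m ⊕ Fin p)) ⊕ Fin pC) ((Fin m ⊕ (Fin p ⊕ Fin m)) ⊕ Fin mC) ℂ)
    (hN : N = fromBlocks N11 N12 N21 0)
    (VE : Matrix (Fin p) (Fin p) ℂ) (WE : Matrix (Fin m) (Fin m) ℂ)
    (VF : Matrix (Fin m) (Fin m) ℂ) (WF : Matrix (Fin p) (Fin p) ℂ)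
    (VCw : Matrix (Fin pC) (Fin pC) ℂ) (WCw : Matrix (Fin mC) (Fin mC) ℂ)
    (hVE : IsUnit VE) (hWE : IsUnit WE) (hVF : IsUnit VF) (hWF : IsUnit WF)
    (V : Matrix ((Fin p ⊕ (Fin m ⊕ Fin p)) ⊕ Fin pC) ((Fin p ⊕ (Fin m ⊕ Fin p)) ⊕ Fin pC) ℂ)
    (hV : V = fromBlocks (fromBlocks VE 0 0 (fromBlocks VF 0 0 VE)) 0 0 VCw)
    (W : Matrix ((Fin m ⊕ (Fin p ⊕ Fin m)) ⊕ Fin mC) ((Fin m ⊕ (Fin p ⊕ Fin m)) ⊕ Fin mC) ℂ)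
    (hW : W = fromBlocks (fromBlocks WE 0 0 (fromBlocks WF 0 0 WE)) 0 0 WCw)
    (hscaling : ∃ (Ssc : Matrix (Fin 2) (Fin 2) ℂ) (dF : ℝ), Ssc.PosDef ∧ 0 < dF ∧
      ((fromBlocks
          (fromBlocks (Ssc 0 0 • 1) (fromCols 0 (Ssc 0 1 • 1))
            (fromRows 0 (Ssc 1 0 • 1)) (fromBlocks ((dF : ℂ) • 1) 0 0 (Ssc 1 1 • 1)))
          0 0 (1 : Matrix (Fin pC) (Fin pC) ℂ)) -
        (V * N * W) *
          (fromBlocks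
            (fromBlocks (Ssc 0 0 • 1) (fromCols 0 (Ssc 0 1 • 1))
              (fromRows 0 (Ssc 1 0 • 1)) (fromBlocks ((dF : ℂ) • 1) 0 0 (Ssc 1 1 • 1)))
            0 0 (1 : Matrix (Fin mC) (Fin mC) ℂ) :
            Matrix ((Fin m ⊕ (Fin p ⊕ Fin m)) ⊕ Fin mC) ((Fin m ⊕ (Fin p ⊕ Fin m)) ⊕ Fin mC) ℂ) *
          (V * N * W)ᴴ).PosDef) :
    ∀ (EE : Matrix (Fin m) (Fin p) ℂ) (EF : Matrix (Fin p) (Fin m) ℂ),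
      ‖WE⁻¹ * EE * VE⁻¹‖ ≤ 1 → ‖WF⁻¹ * EF * VF⁻¹‖ ≤ 1 →
      IsUnit (1 - N11 * fromBlocks EE 0 0 (fromBlocks EF 0 0 EE)) ∧
      ‖VCw * (N21 * fromBlocks EE 0 0 (fromBlocks EF 0 0 EE) *
        (1 - N11 * fromBlocks EE 0 0 (fromBlocks EF 0 0 EE))⁻¹ * N12) * WCw‖ < 1 := by
  intro EE EF hEE hEF
  obtain ⟨s, d, hs, hd, hPD⟩ := hscaling
  set Vb := fromBlocks VE 0 0 (fromBlocks VF 0 0 VE)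
  set Wb := fromBlocks WE 0 0 (fromBlocks WF 0 0 WE)
  set Δ := fromBlocks (WE⁻¹ * EE * VE⁻¹) 0 0
    (fromBlocks (WF⁻¹ * EF * VF⁻¹) 0 0 (WE⁻¹ * EE * VE⁻¹))
  have hΔ : fromBlocks EE 0 0 (fromBlocks EF 0 0 EE) = Wb * Δ * Vb := by
    simp [Vb, Wb, Δ, fromBlocks_multiply, mul_nonsing_inv_mul_nonsing_inv_mul_cancel, hVE, hWE,
      hVF, hWF]
  have hVNW : V * N * W = fromBlocks (Vb * N11 * Wb) (Vb * N12 * WCw) (VCw * N21 * Wb)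
      (VCw * (0 : Matrix (Fin pC) (Fin mC) ℂ) * WCw) := by
    simp [hV, hW, hN, Vb, Wb, fromBlocks_multiply, Matrix.mul_assoc]
  have hloop (Ξ : Matrix (Fin mC) (Fin pC) ℂ) (hΞ : ‖Ξ‖ ≤ 1) :
      IsUnit (1 - V * N * W * fromBlocks Δ 0 0 Ξ) :=
    isUnit_one_sub_of_posDef_sub_mul_mul_conjTranspose <|
      hPD.sub_mul_mul_conjTranspose_of_posSemidef <|
        PosSemidef.fromBlocks_sub_mul_mul_conjTranspose
          (posSemidef_blockScaling_sub_mul_mul_conjTranspose hs.posSemidef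
            (Complex.zero_le_real.mpr hd.le) hEE hEF)
          (by simpa using posSemidef_one_sub_mul_conjTranspose_of_norm_le_one hΞ)
  rw [hVNW] at hloop
  obtain ⟨hwell, hperf⟩ := isUnit_one_sub_mul_and_norm_upperLFT_lt_one hloop
  have hwell' : IsUnit (1 - Vb * (N11 * Wb * Δ)) := by simpa only [Matrix.mul_assoc] using hwell
  rw [hΔ]
  refine ⟨by simpa only [Matrix.mul_assoc] using isUnit_one_sub_mul_comm hwell', ?_⟩
  rwa [← zero_add (N21 * _ * _ * N12), ← upperLFT, mul_upperLFT_mul _ _ _ _ _ hwell]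

/-- Performance conclusion of the frequency-pointwise robust performance corollary:
if there are structured scalings `(D_l, D_r)` (built from a Hermitian positive definite
`S ∈ ℂ^{2×2}` and `d_F > 0`) such that `D_l − (V·N·W)·D_r·(V·N·W)^H ≻ 0`, then for all
abstraction errors `E_E` with `‖W_E⁻¹·E_E·V_E⁻¹‖ ≤ 1` and reduction errors `E_F` with
`‖W_F⁻¹·E_F·V_F⁻¹‖ ≤ 1`, writing `Δ = diag(E_E, E_F, E_E)`, the matrix `I − N̄11·Δ` is
invertible and the weighted closed-loop error satisfies
`‖V_Cw·(N̄21·Δ·(I − N̄11·Δ)⁻¹·N̄12)·W_Cw‖ < 1`. -/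
theorem robust_performance
    (p m pC mC : ℕ)
    (E11 : Matrix (Fin pC) (Fin mC) ℂ) (E12 : Matrix (Fin pC) (Fin p) ℂ)
    (E21 : Matrix (Fin m) (Fin mC) ℂ) (E22 : Matrix (Fin m) (Fin p) ℂ)
    (S : Matrix (Fin p) (Fin m) ℂ) (hS : IsUnit (1 - E22 * S))
    (M : Matrix (Fin p) (Fin m) ℂ) (hM : M = S * (1 - E22 * S)⁻¹)
    (N11 : Matrix (Fin p ⊕ (Fin m ⊕ Fin p)) (Fin m ⊕ (Fin p ⊕ Fin m)) ℂ)
    (hN11 : N11 = fromBlocks M (fromCols 1 M) (fromRows 1 M) (fromBlocks 0 0 0 M))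
    (N12 : Matrix (Fin p ⊕ (Fin m ⊕ Fin p)) (Fin mC) ℂ)
    (hN12 : N12 = fromRows (M * E21) (fromRows E21 (M * E21)))
    (N21 : Matrix (Fin pC) (Fin m ⊕ (Fin p ⊕ Fin m)) ℂ)
    (hN21 : N21 = fromCols (E12 * M) (fromCols E12 (E12 * M)))
    (N : Matrix ((Fin p ⊕ (Fin m ⊕ Fin p)) ⊕ Fin pC) ((Fin m ⊕ (Fin p ⊕ Fin m)) ⊕ Fin mC) ℂ)
    (hN : N = fromBlocks N11 N12 N21 0)
    (VE : Matrix (Fin p) (Fin p) ℂ) (WE : Matrix (Fin m) (Fin m) ℂ)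
    (VF : Matrix (Fin m) (Fin m) ℂ) (WF : Matrix (Fin p) (Fin p) ℂ)
    (VCw : Matrix (Fin pC) (Fin pC) ℂ) (WCw : Matrix (Fin mC) (Fin mC) ℂ)
    (hVE : IsUnit VE) (hWE : IsUnit WE) (hVF : IsUnit VF) (hWF : IsUnit WF)
    (hVCw : IsUnit VCw) (hWCw : IsUnit WCw)
    (V : Matrix ((Fin p ⊕ (Fin m ⊕ Fin p)) ⊕ Fin pC) ((Fin p ⊕ (Fin m ⊕ Fin p)) ⊕ Fin pC) ℂ)
    (hV : V = fromBlocks (fromBlocks VE 0 0 (fromBlocks VF 0 0 VE)) 0 0 VCw)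
    (W : Matrix ((Fin m ⊕ (Fin p ⊕ Fin m)) ⊕ Fin mC) ((Fin m ⊕ (Fin p ⊕ Fin m)) ⊕ Fin mC) ℂ)
    (hW : W = fromBlocks (fromBlocks WE 0 0 (fromBlocks WF 0 0 WE)) 0 0 WCw)
    (hscaling : ∃ (Ssc : Matrix (Fin 2) (Fin 2) ℂ) (dF : ℝ), Ssc.PosDef ∧ 0 < dF ∧
      ((fromBlocks
          (fromBlocks (Ssc 0 0 • 1) (fromCols 0 (Ssc 0 1 • 1))
            (fromRows 0 (Ssc 1 0 • 1)) (fromBlocks ((dF : ℂ) • 1) 0 0 (Ssc 1 1 • 1)))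
          0 0 (1 : Matrix (Fin pC) (Fin pC) ℂ)) -
        (V * N * W) *
          (fromBlocks
            (fromBlocks (Ssc 0 0 • 1) (fromCols 0 (Ssc 0 1 • 1))
              (fromRows 0 (Ssc 1 0 • 1)) (fromBlocks ((dF : ℂ) • 1) 0 0 (Ssc 1 1 • 1)))
            0 0 (1 : Matrix (Fin mC) (Fin mC) ℂ) :
            Matrix ((Fin m ⊕ (Fin p ⊕ Fin m)) ⊕ Fin mC) ((Fin m ⊕ (Fin p ⊕ Fin m)) ⊕ Fin mC) ℂ) *
          (V * N * W)ᴴ).PosDef) :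
    ∀ (EE : Matrix (Fin m) (Fin p) ℂ) (EF : Matrix (Fin p) (Fin m) ℂ),
      ‖WE⁻¹ * EE * VE⁻¹‖ ≤ 1 → ‖WF⁻¹ * EF * VF⁻¹‖ ≤ 1 →
      IsUnit (1 - N11 * fromBlocks EE 0 0 (fromBlocks EF 0 0 EE)) ∧
      ‖VCw * (N21 * fromBlocks EE 0 0 (fromBlocks EF 0 0 EE) *
        (1 - N11 * fromBlocks EE 0 0 (fromBlocks EF 0 0 EE))⁻¹ * N12) * WCw‖ < 1 :=
  robust_performance_general p m pC mC N11 N12 N21 N hN VE WE VF WF VCw WCw hVE hWE hVF hWF V hV W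
    hW hscaling
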